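/- Let g : ℝ → ℝ∪{−∞} be defined by g(λ) = E_{x∼μ}[z_x(λ)] where z_x(λ) = inf_y [f(y) + λ‖y−x‖²/2] for a differentiable ρ-semiconvex f. Then for ρ < λ₁ ≤ λ₂, the derivative of g satisfies (1 − 2√((λ₂ − λ₁)/(λ₂ − ρ))) · g'(λ₁) ≤ g'(λ₂). -/
import Mathlib


open MeasureTheory
open scoped RealInnerProductSpace


set_option maxHeartbeats 1000000

section helpers

variable {E : Type*} [NormedAddCommGroup E] [InnerProductSpace ℝ E] [CompleteSpace E]

lemma quad_hasGradientAt (c : ℝ) (x y : E) :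
    HasGradientAt (fun z => c / 2 * ‖z - x‖ ^ 2) (c • (y - x)) y := by
  have h1 : HasFDerivAt (fun z : E => z - x) (ContinuousLinearMap.id ℝ E) y :=
    (hasFDerivAt_id y).sub_const x
  have h2 := (h1.inner ℝ h1).const_mul (c / 2)
  rw [hasGradientAt_iff_hasFDerivAt]
  have hkey : (c / 2) • ((fderivInnerCLM ℝ ((y : E) - x, y - x)).comp
      ((ContinuousLinearMap.id ℝ E).prod (ContinuousLinearMap.id ℝ E)))
      = InnerProductSpace.toDual ℝ E (c • (y - x)) := by
    ext v
    simp only [ContinuousLinearMap.coe_smul', Pi.smul_apply,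
      ContinuousLinearMap.coe_comp', Function.comp_apply,
      ContinuousLinearMap.prod_apply, ContinuousLinearMap.coe_id', id_eq,
      fderivInnerCLM_apply, InnerProductSpace.toDual_apply_apply, real_inner_smul_left,
      smul_eq_mul]
    rw [real_inner_comm v (y - x)]
    ring
  have h4 : (fun z : E => c / 2 * ‖z - x‖ ^ 2) = fun z : E => c / 2 * ⟪z - x, z - x⟫ := by
    funext z; rw [real_inner_self_eq_norm_sq]
  rw [h4, ← hkey]
  exact h2

lemma HasGradientAt.add' {f g : E → ℝ} {a b : E} {x : E}
    (hf : HasGradientAt f a x) (hg : HasGradientAt g b x) :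
    HasGradientAt (fun y => f y + g y) (a + b) x := by
  rw [hasGradientAt_iff_hasFDerivAt] at *
  rw [map_add]
  exact hf.add hg

lemma subgrad {h : E → ℝ} (hc : ConvexOn ℝ Set.univ h) {y g : E}
    (hg : HasGradientAt h g y) (z : E) : h y + ⟪g, z - y⟫ ≤ h z := by
  have hφ : ConvexOn ℝ Set.univ (h ∘ (AffineMap.lineMap y z : ℝ →ᵃ[ℝ] E)) := by
    simpa using hc.comp_affineMap (AffineMap.lineMap y z)
  have hl : HasDerivAt (fun t : ℝ => (AffineMap.lineMap y z : ℝ →ᵃ[ℝ] E) t) (z - y) 0 :=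
    AffineMap.hasDerivAt_lineMap
  have hF := hasGradientAt_iff_hasFDerivAt.mp hg
  have hF' : HasFDerivAt h (InnerProductSpace.toDual ℝ E g)
      ((AffineMap.lineMap y z : ℝ →ᵃ[ℝ] E) (0 : ℝ)) := by
    simpa using hF
  have hd := hF'.comp_hasDerivAt (0 : ℝ) hl
  have := hφ.le_slope_of_hasDerivAt (Set.mem_univ (0 : ℝ)) (Set.mem_univ (1 : ℝ)) one_pos
    (by simpa [Function.comp] using hd)
  have hslope : slope (h ∘ (AffineMap.lineMap y z : ℝ →ᵃ[ℝ] E)) 0 1 = h z - h y := by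
    simp [slope_def_field, Function.comp]
  rw [hslope] at this
  simpa [InnerProductSpace.toDual_apply_apply] using by linarith [this]

end helpers


/-- for `g(λ) = E_{x∼μ}[inf_y (f y + (λ/2)‖y-x‖²)]` with `f`
differentiable and `ρ`-semiconvex, the derivative
`g'(λ) = E_μ[(1/2)‖y*_{λ,x} − x‖²]` satisfies, for `ρ < λ₁ ≤ λ₂`,
`(1 − 2√((λ₂−λ₁)/(λ₂−ρ))) g'(λ₁) ≤ g'(λ₂)`. -/
theorem envelope_derivative_holder {d : ℕ}
    (f : EuclideanSpace ℝ (Fin d) → ℝ)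
    (G : EuclideanSpace ℝ (Fin d) → EuclideanSpace ℝ (Fin d))
    (hG : ∀ y, HasGradientAt f (G y) y)
    (ρ : ℝ) (hρ : 0 ≤ ρ)
    (hsemi : ConvexOn ℝ Set.univ (fun y => f y + ρ / 2 * ‖y‖ ^ 2))
    (μ : Measure (EuclideanSpace ℝ (Fin d))) [IsProbabilityMeasure μ]
    (hμ2 : Integrable (fun x => ‖x‖ ^ 2) μ)
    (hGint : Integrable (fun x => ‖G x‖ ^ 2) μ)
    (ystar : ℝ → EuclideanSpace ℝ (Fin d) → EuclideanSpace ℝ (Fin d))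
    (hmin : ∀ lam, ρ < lam → ∀ x z,
      f (ystar lam x) + lam / 2 * ‖ystar lam x - x‖ ^ 2 ≤ f z + lam / 2 * ‖z - x‖ ^ 2)
    (lam₁ lam₂ : ℝ) (h₁ : ρ < lam₁) (h₁₂ : lam₁ ≤ lam₂) :
    (1 - 2 * Real.sqrt ((lam₂ - lam₁) / (lam₂ - ρ))) *
        (∫ x, 1 / 2 * ‖ystar lam₁ x - x‖ ^ 2 ∂μ)
      ≤ ∫ x, 1 / 2 * ‖ystar lam₂ x - x‖ ^ 2 ∂μ := by
  have h₂ : ρ < lam₂ := lt_of_lt_of_le h₁ h₁₂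
  -- gradient of the semiconvex part
  have hgrad_h : ∀ u : EuclideanSpace ℝ (Fin d), HasGradientAt (fun y => f y + ρ / 2 * ‖y‖ ^ 2) (G u + ρ • u) u := by
    intro u
    have hq : HasGradientAt (fun z : EuclideanSpace ℝ (Fin d) => ρ / 2 * ‖z‖ ^ 2) (ρ • u) u := by
      simpa using quad_hasGradientAt ρ 0 u
    exact (hG u).add' hq
  -- first order condition at the minimizer
  have hfoc : ∀ lam, ρ < lam → ∀ x : EuclideanSpace ℝ (Fin d), G (ystar lam x) + lam • (ystar lam x - x) = 0 := by
    intro lam hl x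
    set y := ystar lam x with hy
    have hgradF : HasGradientAt (fun z => f z + lam / 2 * ‖z - x‖ ^ 2)
        (G y + lam • (y - x)) y := (hG y).add' (quad_hasGradientAt lam x y)
    have hlm : IsLocalMin (fun z => f z + lam / 2 * ‖z - x‖ ^ 2) y :=
      Filter.Eventually.of_forall (hmin lam hl x)
    have h0 := hlm.hasFDerivAt_eq_zero (hasGradientAt_iff_hasFDerivAt.mp hgradF)
    have := (InnerProductSpace.toDual ℝ (EuclideanSpace ℝ (Fin d))).map_eq_zero_iff.mp h0
    exact this
  -- monotonicity of subgradients
  have hmono : ∀ u v : EuclideanSpace ℝ (Fin d), 0 ≤ ⟪(G u + ρ • u) - (G v + ρ • v), u - v⟫ := by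
    intro u v
    have h1 := subgrad hsemi (hgrad_h u) v
    have h2 := subgrad hsemi (hgrad_h v) u
    have e1 : ⟪G u + ρ • u, v - u⟫ = -⟪G u + ρ • u, u - v⟫ := by
      rw [← inner_neg_right]; congr 1; abel
    rw [e1] at h1
    rw [inner_sub_left]
    linarith
  -- Lipschitz / continuity of the prox map
  have hcont : ∀ lam, ρ < lam → Continuous (fun x : EuclideanSpace ℝ (Fin d) => ystar lam x) := by
    intro lam hl
    have key : ∀ x x' : EuclideanSpace ℝ (Fin d), ‖ystar lam x - ystar lam x'‖ ≤ lam / (lam - ρ) * ‖x - x'‖ := by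
      intro x x'
      set y := ystar lam x
      set y' := ystar lam x'
      have hGy : G y = lam • x - lam • y := by
        have h0 := hfoc lam hl x
        have : G y = -(lam • (y - x)) := eq_neg_of_add_eq_zero_left h0
        rw [this, smul_sub]; abel
      have hGy' : G y' = lam • x' - lam • y' := by
        have h0 := hfoc lam hl x'
        have : G y' = -(lam • (y' - x')) := by
          have := eq_neg_of_add_eq_zero_left h0
          exact this
        rw [this, smul_sub]; abel
      have hm := hmono y y'
      have hexp : (G y + ρ • y) - (G y' + ρ • y') =
          lam • (x - x') - lam • (y - y') + ρ • (y - y') := by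
        rw [hGy, hGy', smul_sub, smul_sub, smul_sub]; abel
      rw [hexp] at hm
      have hm' : 0 ≤ lam * ⟪x - x', y - y'⟫ - lam * ‖y - y'‖ ^ 2 + ρ * ‖y - y'‖ ^ 2 := by
        have := hm
        rw [inner_add_left, inner_sub_left, real_inner_smul_left, real_inner_smul_left,
          real_inner_smul_left, real_inner_self_eq_norm_sq] at this
        linarith
      have hcs : ⟪x - x', y - y'⟫ ≤ ‖x - x'‖ * ‖y - y'‖ := real_inner_le_norm _ _
      set m := ‖y - y'‖
      set dd := ‖x - x'‖
      have hm0 : 0 ≤ m := norm_nonneg _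
      have hd0 : 0 ≤ dd := norm_nonneg _
      have hlam0 : 0 < lam := lt_of_le_of_lt hρ hl
      have hc0 : 0 < lam - ρ := by linarith
      have hq : (lam - ρ) * m ^ 2 ≤ lam * (dd * m) := by nlinarith
      rcases eq_or_lt_of_le hm0 with hm0' | hm0'
      · rw [← hm0']; positivity
      · rw [div_mul_eq_mul_div, le_div_iff₀ hc0]
        nlinarith
    have hlip : LipschitzWith (Real.toNNReal (lam / (lam - ρ))) (fun x : EuclideanSpace ℝ (Fin d) => ystar lam x) := by
      apply LipschitzWith.of_dist_le_mul
      intro x x'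
      rw [dist_eq_norm, dist_eq_norm]
      have hnn : (0 : ℝ) ≤ lam / (lam - ρ) := by
        have hlam0 : 0 < lam := lt_of_le_of_lt hρ hl
        have : 0 < lam - ρ := by linarith
        positivity
      rw [Real.coe_toNNReal _ hnn]
      exact key x x'
    exact hlip.continuous
  -- integrability
  have hint : ∀ lam, ρ < lam → Integrable (fun x : EuclideanSpace ℝ (Fin d) => 1 / 2 * ‖ystar lam x - x‖ ^ 2) μ := by
    intro lam hl
    have hc0 : 0 < lam - ρ := by linarith
    have hmeas : AEStronglyMeasurable (fun x : EuclideanSpace ℝ (Fin d) => 1 / 2 * ‖ystar lam x - x‖ ^ 2) μ := by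
      have : Continuous fun x : EuclideanSpace ℝ (Fin d) => 1 / 2 * ‖ystar lam x - x‖ ^ 2 :=
        continuous_const.mul (((hcont lam hl).sub continuous_id).norm.pow 2)
      exact this.aestronglyMeasurable
    refine (hGint.const_mul (2 / (lam - ρ) ^ 2)).mono' hmeas (Filter.Eventually.of_forall ?_)
    intro x
    set y := ystar lam x
    set n := ‖y - x‖ with hn
    have hn0 : 0 ≤ n := norm_nonneg _
    have hg0 : 0 ≤ ‖G x‖ := norm_nonneg _
    -- subgradient inequality at x
    have h1 := subgrad hsemi (hgrad_h x) y
    have hid : ‖y‖ ^ 2 = ‖x‖ ^ 2 + 2 * ⟪x, y - x⟫ + n ^ 2 := by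
      have := norm_add_sq_real x (y - x)
      have e : x + (y - x) = y := by abel
      rw [e] at this
      exact this
    have h1' : f x + ⟪G x, y - x⟫ + ρ * ⟪x, y - x⟫ + ρ / 2 * ‖x‖ ^ 2
        ≤ f y + ρ / 2 * ‖y‖ ^ 2 := by
      have := h1
      rw [inner_add_left, real_inner_smul_left] at this
      linarith
    have h3 : f y + lam / 2 * n ^ 2 ≤ f x := by
      have := hmin lam hl x x
      simpa using this
    have h4 : -(‖G x‖ * n) ≤ ⟪G x, y - x⟫ := by
      have := abs_real_inner_le_norm (G x) (y - x)
      rw [← hn] at this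
      linarith [neg_abs_le (⟪G x, y - x⟫)]
    rw [hid] at h1'
    have hkey : (lam - ρ) / 2 * n ^ 2 ≤ ‖G x‖ * n := by linarith
    have hgoal : (lam - ρ) ^ 2 * n ^ 2 ≤ 4 * ‖G x‖ ^ 2 := by
      nlinarith [mul_le_mul_of_nonneg_left hkey hc0.le, sq_nonneg ((lam - ρ) * n - 2 * ‖G x‖)]
    rw [Real.norm_of_nonneg (by positivity)]
    rw [show (2:ℝ) / (lam - ρ) ^ 2 * ‖G x‖ ^ 2 = 2 * ‖G x‖ ^ 2 / (lam - ρ) ^ 2 by ring,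
      le_div_iff₀ (by positivity : (0:ℝ) < (lam - ρ) ^ 2)]
    nlinarith [hgoal]
  -- pointwise inequality
  set t := (lam₂ - lam₁) / (lam₂ - ρ) with ht
  have ht0 : 0 ≤ t := by
    apply div_nonneg <;> linarith
  set s := Real.sqrt t with hs
  have hs0 : 0 ≤ s := Real.sqrt_nonneg _
  have hs2 : s ^ 2 = t := Real.sq_sqrt ht0
  have key : ∀ x : EuclideanSpace ℝ (Fin d), (1 - 2 * s) * (1 / 2 * ‖ystar lam₁ x - x‖ ^ 2)
      ≤ 1 / 2 * ‖ystar lam₂ x - x‖ ^ 2 := by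
    intro x
    set y₁ := ystar lam₁ x
    set y₂ := ystar lam₂ x
    set a := ‖y₁ - x‖ with ha
    set b := ‖y₂ - x‖ with hb
    set n := ‖y₁ - y₂‖ with hnn
    have ha0 : 0 ≤ a := norm_nonneg _
    have hb0 : 0 ≤ b := norm_nonneg _
    have hn0 : 0 ≤ n := norm_nonneg _
    set w := y₁ - y₂ with hw
    -- strong convexity at y₂
    have hGy2 : G y₂ = lam₂ • x - lam₂ • y₂ := by
      have h0 := hfoc lam₂ h₂ x
      have : G y₂ = -(lam₂ • (y₂ - x)) := eq_neg_of_add_eq_zero_left h0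
      rw [this, smul_sub]; abel
    have hsub := subgrad hsemi (hgrad_h y₂) y₁
    have hsub' : f y₂ + ρ / 2 * ‖y₂‖ ^ 2 + (lam₂ * ⟪x, w⟫ - lam₂ * ⟪y₂, w⟫ + ρ * ⟪y₂, w⟫)
        ≤ f y₁ + ρ / 2 * ‖y₁‖ ^ 2 := by
      have := hsub
      rw [hGy2] at this
      rw [inner_add_left, inner_sub_left, real_inner_smul_left, real_inner_smul_left,
        real_inner_smul_left] at this
      linarith
    have idA : a ^ 2 = b ^ 2 + 2 * (⟪y₂, w⟫ - ⟪x, w⟫) + n ^ 2 := by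
      have h5 := norm_add_sq_real (y₂ - x) w
      have e : y₂ - x + w = y₁ - x := by rw [hw]; abel
      rw [e, inner_sub_left] at h5
      rw [ha, hb, hnn, hw]
      linarith
    have idB : ‖y₁‖ ^ 2 = ‖y₂‖ ^ 2 + 2 * ⟪y₂, w⟫ + n ^ 2 := by
      have h5 := norm_add_sq_real y₂ w
      have e : y₂ + w = y₁ := by rw [hw]; abel
      rw [e] at h5
      rw [hnn, hw]
      linarith
    have hmin1 := hmin lam₁ h₁ x y₂
    have hnt : (lam₂ - ρ) * n ^ 2 ≤ (lam₂ - lam₁) * (a ^ 2 - b ^ 2) := by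
      have hm1 : f y₁ + lam₁ / 2 * a ^ 2 ≤ f y₂ + lam₁ / 2 * b ^ 2 := hmin1
      rw [idB] at hsub'
      have h6 : lam₂ * a ^ 2 = lam₂ * (b ^ 2 + 2 * (⟪y₂, w⟫ - ⟪x, w⟫) + n ^ 2) := by
        rw [idA]
      linarith
    have hn2 : n ^ 2 ≤ t * a ^ 2 := by
      have hc0 : 0 < lam₂ - ρ := by linarith
      rw [ht]
      rw [div_mul_eq_mul_div, le_div_iff₀ hc0]
      nlinarith [sq_nonneg b]
    have hna : n ≤ s * a := by
      have h6 : n ^ 2 ≤ (s * a) ^ 2 := by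
        rw [mul_pow, hs2]; exact hn2
      have h7 := Real.sqrt_le_sqrt h6
      rwa [Real.sqrt_sq hn0, Real.sqrt_sq (by positivity)] at h7
    have htri : a ≤ n + b := by
      have e : y₁ - x = (y₁ - y₂) + (y₂ - x) := by abel
      rw [ha, e]
      exact norm_add_le _ _
    have h1 : a ^ 2 - 2 * a * n ≤ b ^ 2 := by
      nlinarith [sq_nonneg (b - a), mul_nonneg (show (0:ℝ) ≤ b + n - a by linarith) ha0]
    nlinarith [mul_le_mul_of_nonneg_left hna ha0]
  calc (1 - 2 * s) * (∫ x, 1 / 2 * ‖ystar lam₁ x - x‖ ^ 2 ∂μ)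
      = ∫ x, (1 - 2 * s) * (1 / 2 * ‖ystar lam₁ x - x‖ ^ 2) ∂μ := (integral_const_mul _ _).symm
    _ ≤ ∫ x, 1 / 2 * ‖ystar lam₂ x - x‖ ^ 2 ∂μ :=
        integral_mono ((hint lam₁ h₁).const_mul _) (hint lam₂ h₂) key
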